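/- arXiv:1706.00105 — 4 statements merged into one kernel-verified Lean document; each statement's English description precedes it below -/
import Mathlib

section
/- Let G be a finite graph with edge-labeling α: E → Z, let p be prime and β ≥ 1. Let W ⊆ V be an equivalence class of the relation 'connected by a path of edges whose labels are divisible by p^β'. Then the vertex-labeling b with b(v) = p^{β-1} (mod p^β) for v ∈ W and b(v) = 0 for v ∉ W is a spline on (G, α) over Z/p^βZ. -/
open scoped Classical

/-!
If the label of an edge `xy` is divisible by `p^β`, then `x` and `y` lie in the same
zero-connected component and `b x = b y`. Otherwise `gcd(α(xy), p^β) = p^k` with `k < β`, and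
Bézout makes `α(xy)` a divisor of `p^k`, hence of `p^(β-1)`, in `ZMod (p^β)`; so every
difference of values of `b` lies in the ideal generated by `α(xy)`.
-/

theorem ZMod.intCast_dvd_gcd (a : ℤ) (n : ℕ) : (a : ZMod n) ∣ ((Int.gcd a n : ℕ) : ZMod n) :=
  ⟨Int.gcdA a n, by
    rw [← Int.cast_natCast, Int.gcd_eq_gcd_ab]
    push_cast
    rw [ZMod.natCast_self, zero_mul, add_zero]⟩

theorem Int.gcd_prime_pow_dvd_pow_pred_of_not_dvd {p β : ℕ} (hp : p.Prime) {a : ℤ}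
    (ha : ¬ (p : ℤ) ^ β ∣ a) : Int.gcd a ↑(p ^ β) ∣ p ^ (β - 1) := by
  obtain ⟨k, hk, hgcd⟩ := (Nat.dvd_prime_pow hp).1
    (Int.natCast_dvd_natCast.1 (Int.gcd_dvd_right a ↑(p ^ β)))
  have hkβ : k ≠ β := by
    rintro rfl
    have hgcd_dvd := Int.gcd_dvd_left a ↑(p ^ k)
    rw [hgcd] at hgcd_dvd
    exact ha (by exact_mod_cast hgcd_dvd)
  rw [hgcd]
  exact pow_dvd_pow p (by omega)

theorem ZMod.intCast_dvd_prime_pow_pred {p β : ℕ} (hp : p.Prime) {a : ℤ}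
    (ha : ¬ (p : ℤ) ^ β ∣ a) : (a : ZMod (p ^ β)) ∣ (p : ZMod (p ^ β)) ^ (β - 1) := by
  refine (ZMod.intCast_dvd_gcd a (p ^ β)).trans ?_
  rw [← Nat.cast_pow]
  exact Nat.cast_dvd_cast (Int.gcd_prime_pow_dvd_pow_pred_of_not_dvd hp ha)

theorem Ideal.ite_sub_ite_mem {R : Type*} [Ring R] {I : Ideal R} {c : R} (hc : c ∈ I)
    (P Q : Prop) [Decidable P] [Decidable Q] :
    ((if P then c else 0) - if Q then c else 0) ∈ I := by
  split_ifs <;> simp [hc, I.neg_mem hc]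

theorem component_spline_is_spline_general
    {V : Type*} (E : V → V → Prop) (α : V → V → ℤ)
    (p : ℕ) (hp : p.Prime) (β : ℕ)
    (u₀ : V)
    (W : Set V)
    (hW : W = {w : V | Relation.EqvGen (fun a b => E a b ∧ (p : ℤ) ^ β ∣ α a b) u₀ w})
    (b : V → ZMod (p ^ β))
    (hb : b = fun v => if v ∈ W then ((p : ZMod (p ^ β)) ^ (β - 1)) else 0) :
    ∀ x y : V, E x y → b x - b y ∈ Ideal.span {((α x y : ℤ) : ZMod (p ^ β))} := by
  intro x y hxy
  subst hb
  by_cases hd : (p : ℤ) ^ β ∣ α x y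
  · have hstep := Relation.EqvGen.rel (r := fun a b => E a b ∧ (p : ℤ) ^ β ∣ α a b) x y ⟨hxy, hd⟩
    have hxW : x ∈ W ↔ y ∈ W := by
      rw [hW]
      exact ⟨fun hx => hx.trans _ _ _ hstep, fun hy => hy.trans _ _ _ hstep.symm⟩
    simp [hxW]
  · exact Ideal.ite_sub_ite_mem
      (Ideal.mem_span_singleton.2 (ZMod.intCast_dvd_prime_pow_pred hp hd)) _ _

/-- For a zero-connected component `W` of `G` mod `p^β` (an equivalence class
of the relation "joined by a path of edges whose labels are divisible by `p^β`"), the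
vertex-labeling equal to `p^(β-1)` on `W` and `0` elsewhere is a spline over `ZMod (p^β)`. -/
theorem component_spline_is_spline
    {V : Type*} [Fintype V] (E : V → V → Prop) (hsymm : Symmetric E)
    (hirrefl : Irreflexive E) (α : V → V → ℤ) (hαsymm : ∀ u v, α u v = α v u)
    (p : ℕ) (hp : p.Prime) (β : ℕ) (hβ : 1 ≤ β)
    (u₀ : V)
    (W : Set V)
    (hW : W = {w : V | Relation.EqvGen (fun a b => E a b ∧ (p : ℤ) ^ β ∣ α a b) u₀ w})
    (b : V → ZMod (p ^ β))
    (hb : b = fun v => if v ∈ W then ((p : ZMod (p ^ β)) ^ (β - 1)) else 0) :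
    ∀ x y : V, E x y → b x - b y ∈ Ideal.span {((α x y : ℤ) : ZMod (p ^ β))} :=
  component_spline_is_spline_general E α p hp β u₀ W hW b hb
end

section
/- Let G be a finite graph with edge-labeling α: E → Z such that every edge label α(e) divides the integer m. If q is a spline on (G, α) over Z/mZ and p ∈ Z^V is any integer vertex-labeling with p(v) ≡ q(v) (mod m) for all v, then p is a spline on (G, α) over Z, i.e., α(uv) divides p(u) - p(v) for every edge uv. -/
/-! Reduction modulo `m` followed by reduction modulo `a ∣ m` is reduction modulo `a`, and it
kills `a`; so an integer whose class modulo `m` is a multiple of `a` is divisible by `a`. -/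

theorem Int.dvd_of_intCast_mem_span_singleton {m : ℕ} {a x : ℤ} (ha : a ∣ m)
    (hx : (x : ZMod m) ∈ Ideal.span {(a : ZMod m)}) : a ∣ x := by
  let φ := ZMod.castHom (Int.natAbs_dvd_natAbs.mpr ha) (ZMod a.natAbs)
  have hspan : Ideal.span {(a : ZMod m)} ≤ RingHom.ker φ := by
    rw [Ideal.span_singleton_le_iff_mem, RingHom.mem_ker, map_intCast,
      ZMod.intCast_zmod_eq_zero_iff_dvd, Int.natCast_natAbs, abs_dvd]
  have hφx : (x : ZMod a.natAbs) = 0 := by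
    simpa only [RingHom.mem_ker, map_intCast] using hspan hx
  rwa [ZMod.intCast_zmod_eq_zero_iff_dvd, Int.natCast_natAbs, abs_dvd] at hφx

theorem lift_of_spline_mod_m_is_integer_spline_general
    {V : Type*} (E : V → V → Prop) (α : V → V → ℤ)
    (m : ℕ)
    (hedge : ∀ u v : V, E u v → α u v ∣ (m : ℤ))
    (q : V → ZMod m)
    (hq : ∀ u v : V, E u v → q u - q v ∈ Ideal.span {((α u v : ℤ) : ZMod m)})
    (f : V → ℤ) (hlift : ∀ v : V, ((f v : ℤ) : ZMod m) = q v) :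
    ∀ u v : V, E u v → α u v ∣ f u - f v := by
  intro u v he
  refine Int.dvd_of_intCast_mem_span_singleton (hedge u v he) ?_
  simpa only [Int.cast_sub, hlift] using hq u v he

/-- If every edge label divides `m`, `q` is a spline over `ZMod m`,
and `f : V → ℤ` lifts `q` (vertexwise mod `m`), then `f` is an integer spline:
`α u v ∣ f u - f v` for every edge. -/
theorem lift_of_spline_mod_m_is_integer_spline
    {V : Type*} [Fintype V] (E : V → V → Prop) (hsymm : Symmetric E)
    (hirrefl : Irreflexive E) (α : V → V → ℤ)
    (m : ℕ) (hm : 0 < m)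
    (hedge : ∀ u v : V, E u v → α u v ∣ (m : ℤ))
    (q : V → ZMod m)
    (hq : ∀ u v : V, E u v → q u - q v ∈ Ideal.span {((α u v : ℤ) : ZMod m)})
    (f : V → ℤ) (hlift : ∀ v : V, ((f v : ℤ) : ZMod m) = q v) :
    ∀ u v : V, E u v → α u v ∣ f u - f v :=
  lift_of_spline_mod_m_is_integer_spline_general E α m hedge q hq f hlift
end

section
/- Let G be a finite connected graph with edge-labeling α: E → Z and let p be prime. Every spline f on (G, α) over Z/pZ is constant on each zero-connected component of G mod p; consequently f is a Z/pZ-linear combination of the indicator splines of the zero-connected components (the splines equal to 1 on one zero-connected component and 0 elsewhere). -/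
/-!
An edge `uv` whose label is divisible by `p` has label `0` in `ZMod p`, so the spline condition
forces `f u = f v` along it; hence `f` is constant on the classes of the equivalence relation
generated by these edges. Choosing one representative `w` in each of the finitely many classes,
`f` is the sum of the indicators of the classes weighted by the values `f w`.
-/

namespace Equivalence

variable {V : Type*} {r : V → V → Prop}

theorem exists_finset_transversal [Finite V] (hr : Equivalence r) :
    ∃ S : Finset V, (∀ w ∈ S, ∀ w' ∈ S, w ≠ w' → ¬ r w w') ∧ ∀ v, ∃ w ∈ S, r w v := by
  let s : Setoid V := ⟨r, hr⟩
  refine ⟨(Set.range fun q : Quotient s => q.out).toFinite.toFinset, ?_, fun v => ?_⟩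
  · simp only [Set.Finite.mem_toFinset, Set.mem_range]
    rintro _ ⟨q, rfl⟩ _ ⟨q', rfl⟩ hne hrel
    exact hne (congrArg _ (Quotient.out_equiv_out.1 hrel))
  · exact ⟨(⟦v⟧ : Quotient s).out, by simp, Quotient.mk_out v⟩

theorem eq_sum_smul_indicator {R : Type*} [Semiring R] [DecidableRel r] (hr : Equivalence r)
    {S : Finset V} (hS_disj : ∀ w ∈ S, ∀ w' ∈ S, w ≠ w' → ¬ r w w')
    (hS_cover : ∀ v, ∃ w ∈ S, r w v) {f : V → R} (hf : ∀ u v, r u v → f u = f v) :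
    f = ∑ w ∈ S, f w • fun v => if r w v then (1 : R) else 0 := by
  funext v
  obtain ⟨w₀, hw₀, hw₀v⟩ := hS_cover v
  rw [Finset.sum_apply, Finset.sum_eq_single_of_mem w₀ hw₀]
  · simp [hw₀v, hf _ _ hw₀v]
  · intro w hw hne
    have hwv : ¬ r w v := fun hwv => hS_disj w hw w₀ hw₀ hne (hr.trans hwv (hr.symm hw₀v))
    simp [hwv]

end Equivalence

open scoped Classical

theorem spline_mod_p_combination_of_indicators_general
    {V : Type*} [Fintype V] (E : V → V → Prop) (α : V → V → ℤ)
    (p : ℕ)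
    (f : V → ZMod p)
    (hf : ∀ u v : V, E u v → f u - f v ∈ Ideal.span {((α u v : ℤ) : ZMod p)}) :
    (∀ u v : V,
        Relation.EqvGen (fun a b => E a b ∧ (p : ℤ) ∣ α a b) u v → f u = f v)
    ∧ ∃ (S : Finset V) (c : V → ZMod p),
        (∀ w ∈ S, ∀ w' ∈ S, w ≠ w' →
          ¬ Relation.EqvGen (fun a b => E a b ∧ (p : ℤ) ∣ α a b) w w')
        ∧ (∀ v : V, ∃ w ∈ S,
            Relation.EqvGen (fun a b => E a b ∧ (p : ℤ) ∣ α a b) w v)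
        ∧ f = ∑ w ∈ S, c w •
            (fun v => if Relation.EqvGen (fun a b => E a b ∧ (p : ℤ) ∣ α a b) w v
              then (1 : ZMod p) else 0) := by
  have hzero_edge : ∀ u v, E u v ∧ (p : ℤ) ∣ α u v → f u = f v := by
    rintro u v ⟨huv, hdvd⟩
    have hspan := hf u v huv
    rwa [(ZMod.intCast_zmod_eq_zero_iff_dvd _ _).2 hdvd, Ideal.mem_span_singleton, zero_dvd_iff,
      sub_eq_zero] at hspan
  have hconst : ∀ u v, Relation.EqvGen (fun a b => E a b ∧ (p : ℤ) ∣ α a b) u v → f u = f v :=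
    fun _ _ h => Setoid.eqvGen_le (s := Setoid.ker f) hzero_edge h
  have hequiv := Relation.EqvGen.is_equivalence (fun a b => E a b ∧ (p : ℤ) ∣ α a b)
  obtain ⟨S, hS_disj, hS_cover⟩ := hequiv.exists_finset_transversal
  exact ⟨hconst, S, f, hS_disj, hS_cover, hequiv.eq_sum_smul_indicator hS_disj hS_cover hconst⟩

/-- Over `ZMod p` (`p` prime), every spline on a finite connected edge-labeled
graph is constant on each zero-connected component mod `p`, and hence is a `ZMod p`-linear
combination of the indicator splines of the zero-connected components. -/
theorem spline_mod_p_combination_of_indicators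
    {V : Type*} [Fintype V] (E : V → V → Prop) (hsymm : Symmetric E)
    (hirrefl : Irreflexive E) (α : V → V → ℤ) (hαsymm : ∀ u v, α u v = α v u)
    (hconn : ∀ u v : V, Relation.ReflTransGen E u v)
    (p : ℕ) (hp : p.Prime)
    (f : V → ZMod p)
    (hf : ∀ u v : V, E u v → f u - f v ∈ Ideal.span {((α u v : ℤ) : ZMod p)}) :
    (∀ u v : V,
        Relation.EqvGen (fun a b => E a b ∧ (p : ℤ) ∣ α a b) u v → f u = f v)
    ∧ ∃ (S : Finset V) (c : V → ZMod p),
        (∀ w ∈ S, ∀ w' ∈ S, w ≠ w' →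
          ¬ Relation.EqvGen (fun a b => E a b ∧ (p : ℤ) ∣ α a b) w w')
        ∧ (∀ v : V, ∃ w ∈ S,
            Relation.EqvGen (fun a b => E a b ∧ (p : ℤ) ∣ α a b) w v)
        ∧ f = ∑ w ∈ S, c w •
            (fun v => if Relation.EqvGen (fun a b => E a b ∧ (p : ℤ) ∣ α a b) w v
              then (1 : ZMod p) else 0) :=
  spline_mod_p_combination_of_indicators_general E α p f hf
end

section
/- Let G be a finite graph with edge-labeling α: E → Z and let p be prime. Then the Z/pZ-module of splines on (G, α) over Z/pZ is free of rank equal to the number of zero-connected components of G mod p. -/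
/-- The `ZMod p`-vector space of splines over `ZMod p` on `(G, α)` has
dimension equal to the number of zero-connected components of `G` mod `p`. -/
theorem spline_space_rank_eq_num_zero_components
    {V : Type*} [Fintype V] (E : V → V → Prop) (hsymm : Symmetric E)
    (hirrefl : Irreflexive E) (α : V → V → ℤ) (hαsymm : ∀ u v, α u v = α v u)
    (p : ℕ) (hp : p.Prime)
    (S : Submodule (ZMod p) (V → ZMod p))
    (hS : ∀ f : V → ZMod p,
      f ∈ S ↔ ∀ u v : V, E u v → f u - f v ∈ Ideal.span {((α u v : ℤ) : ZMod p)}) :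
    Module.finrank (ZMod p) S =
      Nat.card (Quotient (Relation.EqvGen.setoid (fun a b => E a b ∧ (p : ℤ) ∣ α a b))) := by
  classical
  haveI : Fact p.Prime := ⟨hp⟩
  set r : V → V → Prop := fun a b => E a b ∧ (p : ℤ) ∣ α a b with hr
  set Q := Quotient (Relation.EqvGen.setoid r) with hQ
  -- membership in S iff constant on EqvGen classes
  have key : ∀ f : V → ZMod p, f ∈ S ↔ ∀ a b, Relation.EqvGen r a b → f a = f b := by
    intro f
    rw [hS]
    constructor
    · intro h a b hab
      induction hab with
      | rel a b hab =>
          have h0 : ((α a b : ℤ) : ZMod p) = 0 :=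
            (ZMod.intCast_zmod_eq_zero_iff_dvd _ _).2 hab.2
          have := h a b hab.1
          rw [h0, Ideal.span_singleton_eq_bot.2 rfl, Submodule.mem_bot, sub_eq_zero] at this
          exact this
      | refl a => rfl
      | symm a b _ ih => exact ih.symm
      | trans a b c _ _ ih1 ih2 => exact ih1.trans ih2
    · intro h u v huv
      rw [Ideal.mem_span_singleton]
      by_cases h0 : ((α u v : ℤ) : ZMod p) = 0
      · have : (p : ℤ) ∣ α u v := (ZMod.intCast_zmod_eq_zero_iff_dvd _ _).1 h0
        rw [h u v (Relation.EqvGen.rel u v ⟨huv, this⟩), sub_self]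
        exact dvd_zero _
      · exact (isUnit_iff_ne_zero.2 h0).dvd
  -- linear equivalence with Q → ZMod p
  let e : S ≃ₗ[ZMod p] (Q → ZMod p) :=
    { toFun := fun s => Quotient.lift s.1 (fun a b hab => (key s.1).1 s.2 a b hab)
      map_add' := fun s t => by
        funext q; induction q using Quotient.inductionOn with
        | h v => rfl
      map_smul' := fun c s => by
        funext q; induction q using Quotient.inductionOn with
        | h v => rfl
      invFun := fun g => ⟨fun v => g ⟦v⟧, (key _).2 (fun a b hab => by
        show g ⟦a⟧ = g ⟦b⟧
        exact congrArg g (Quotient.sound hab))⟩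
      left_inv := fun s => rfl
      right_inv := fun g => by
        funext q; induction q using Quotient.inductionOn with
        | h v => rfl }
  haveI : Finite Q := Quotient.finite _
  haveI : Fintype Q := Fintype.ofFinite Q
  rw [e.finrank_eq, Module.finrank_pi, Nat.card_eq_fintype_card]
end
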